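/- Let Ĥ ∈ ℂ^{M×N}, let Ξ ∈ ℂ^{M×M} be Hermitian positive definite, and let P ∈ ℂ^{N×N} be Hermitian positive semidefinite. For any V ∈ ℂ^{M×N} with D = V^H Ĥ P^{1/2} and Σ = V^H Ξ V − 0 (noise-plus-interference covariance conditioned on the combiner), the function f(V) = log₂ det(I_N + D^H (V^H Ξ V)^{-1} D) is maximized over all V with V^H Ξ V invertible by V = Ξ^{-1} Ĥ, achieving f = log₂ det(I_N + P^{1/2} Ĥ^H Ξ^{-1} Ĥ P^{1/2}). -/

import Mathlib

/-
Whitening by `Ξ^{1/2}` turns `V (Vᴴ Ξ V)⁻¹ Vᴴ` into `Ξ^{-1/2} Π Ξ^{-1/2}` with `Π` the orthogonal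
projection onto the range of `Ξ^{1/2} V`, so `V (Vᴴ Ξ V)⁻¹ Vᴴ ≤ Ξ⁻¹` in the Loewner order; the
difference is the Schur complement in the positive semidefinite block `[Ξ⁻¹ | V]ᴴ Ξ [Ξ⁻¹ | V]`.
Conjugating by `P^{1/2} Ĥᴴ` preserves the order, and `A ↦ det (1 + A)` is monotone on positive
semidefinite matrices because `det (A + C) = det A · det (1 + A^{-1/2} C A^{-1/2}) ≥ det A`.
For `V = Ξ⁻¹ Ĥ` the inner Gram matrix is `G = Ĥᴴ Ξ⁻¹ Ĥ`, and `G G⁻¹ G = G` gives equality.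
-/

open Matrix ComplexOrder

/-- The positive semidefinite square root of a positive semidefinite matrix
(removed from Mathlib; restored with its former definition). -/
noncomputable def Matrix.PosSemidef.sqrt {n : Type*} [Fintype n] [DecidableEq n]
    {𝕜 : Type*} [RCLike 𝕜] {A : Matrix n n 𝕜} (hA : A.PosSemidef) : Matrix n n 𝕜 :=
  (hA.1.eigenvectorUnitary : Matrix n n 𝕜) * diagonal ((↑) ∘ (√·) ∘ hA.1.eigenvalues) *
    (star hA.1.eigenvectorUnitary : Matrix n n 𝕜)

open scoped MatrixOrder

lemma Matrix.PosSemidef.posSemidef_sqrt {n : Type*} [Fintype n] [DecidableEq n]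
    {𝕜 : Type*} [RCLike 𝕜] {A : Matrix n n 𝕜} (hA : A.PosSemidef) : hA.sqrt.PosSemidef := by
  have hD : (diagonal ((↑) ∘ (√·) ∘ hA.1.eigenvalues : n → 𝕜)).PosSemidef :=
    PosSemidef.diagonal fun i => by simp [Real.sqrt_nonneg]
  simpa [PosSemidef.sqrt, ← star_eq_conjTranspose] using
    hD.mul_mul_conjTranspose_same (hA.1.eigenvectorUnitary : Matrix n n 𝕜)

section LoewnerOrder

variable {m n 𝕜 : Type*} [Fintype m] [Fintype n] [RCLike 𝕜]

lemma Matrix.mul_mul_conjTranspose_mono (T : Matrix n m 𝕜) {A B : Matrix m m 𝕜} (hAB : A ≤ B) :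
    T * A * Tᴴ ≤ T * B * Tᴴ := by
  rw [le_iff, ← Matrix.sub_mul, ← Matrix.mul_sub]
  exact (le_iff.mp hAB).mul_mul_conjTranspose_same T

variable [DecidableEq m] [DecidableEq n]

lemma Matrix.PosSemidef.one_le_det_one_add {E : Matrix n n 𝕜} (hE : E.PosSemidef) :
    1 ≤ (1 + E).det := by
  have h : 1 + E = cfc (fun x : ℝ => 1 + x) E := by
    rw [cfc_add .., cfc_const_one .., cfc_id' ..]
  rw [h, hE.1.cfc_eq]
  simp only [IsHermitian.cfc, det_map, det_diagonal, Function.comp_apply]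
  norm_cast
  exact Finset.one_le_prod fun i _ => le_add_of_nonneg_right (hE.eigenvalues_nonneg i)

lemma Matrix.PosDef.det_le_det {A B : Matrix n n 𝕜} (hA : A.PosDef) (hAB : A ≤ B) :
    A.det ≤ B.det := by
  set R := CFC.sqrt A
  have hR : R.PosDef := hA.isStrictlyPositive.sqrt.posDef
  have hRR : R * R = A := CFC.sqrt_mul_sqrt_self A hA.posSemidef.nonneg
  have hRu : IsUnit R.det := (isUnit_iff_isUnit_det R).mp hR.isUnit
  have hE : (R⁻¹ * (B - A) * R⁻¹).PosSemidef := by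
    simpa [conjTranspose_nonsing_inv, hR.isHermitian.eq] using
      (le_iff.mp hAB).mul_mul_conjTranspose_same R⁻¹
  have hB : B = R * (1 + R⁻¹ * (B - A) * R⁻¹) * R := by
    simp only [mul_add, add_mul, Matrix.mul_assoc, mul_nonsing_inv_cancel_left _ _ hRu, mul_one,
      nonsing_inv_mul _ hRu, hRR]
    abel
  have hRdet : 0 ≤ R.det := hR.det_pos.le
  calc A.det = R.det * 1 * R.det := by rw [mul_one, ← det_mul, hRR]
    _ ≤ R.det * (1 + R⁻¹ * (B - A) * R⁻¹).det * R.det := by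
      gcongr
      exact hE.one_le_det_one_add
    _ = B.det := by rw [← det_mul, ← det_mul, ← hB]

lemma Matrix.PosDef.mul_inv_mul_conjTranspose_le_inv {Ξ : Matrix m m 𝕜} (hΞ : Ξ.PosDef)
    {V : Matrix m n 𝕜} (hV : IsUnit (Vᴴ * Ξ * V)) : V * (Vᴴ * Ξ * V)⁻¹ * Vᴴ ≤ Ξ⁻¹ := by
  have hW : (Vᴴ * Ξ * V).PosDef :=
    (hΞ.posSemidef.conjTranspose_mul_mul_same V).posDef_iff_isUnit.mpr hV
  have := hV.invertible
  have hΞu : IsUnit Ξ.det := (isUnit_iff_isUnit_det Ξ).mp hΞ.isUnit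
  have hblock : fromBlocks Ξ⁻¹ V Vᴴ (Vᴴ * Ξ * V) = (fromCols Ξ⁻¹ V)ᴴ * Ξ * fromCols Ξ⁻¹ V := by
    simp [conjTranspose_fromCols_eq_fromRows_conjTranspose, conjTranspose_nonsing_inv,
      hΞ.isHermitian.eq, fromRows_mul, Matrix.mul_assoc, nonsing_inv_mul _ hΞu,
      mul_nonsing_inv _ hΞu]
  exact (PosDef.fromBlocks₂₂ _ _ hW).mp (hblock ▸ hΞ.posSemidef.conjTranspose_mul_mul_same _)

end LoewnerOrder

lemma Matrix.logb_re_det_one_add_le {n : Type*} [Fintype n] [DecidableEq n]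
    {X Y : Matrix n n ℂ} (hX : 0 ≤ X) (hXY : X ≤ Y) :
    Real.logb 2 (1 + X).det.re ≤ Real.logb 2 (1 + Y).det.re := by
  have h1X : (1 + X).PosDef := PosDef.one.add_posSemidef (nonneg_iff_posSemidef.mp hX)
  have hpos : 0 < (1 + X).det.re := by simpa using (Complex.lt_def.mp h1X.det_pos).1
  exact Real.logb_le_logb_of_le one_lt_two hpos
    (Complex.le_def.mp (h1X.det_le_det (add_le_add_right hXY 1))).1

/-- Optimality of MMSE combining (deterministic form): over all combiners `V` with
`Vᴴ Ξ V` invertible, `log₂ det(I + P^{1/2} Ĥᴴ V (Vᴴ Ξ V)⁻¹ Vᴴ Ĥ P^{1/2})` is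
maximized by `V = Ξ⁻¹ Ĥ`, achieving `log₂ det(I + P^{1/2} Ĥᴴ Ξ⁻¹ Ĥ P^{1/2})`. -/
theorem stmt12 (M N : ℕ) (Hh : Matrix (Fin M) (Fin N) ℂ)
    (Xi : Matrix (Fin M) (Fin M) ℂ) (hXi : Xi.PosDef)
    (P : Matrix (Fin N) (Fin N) ℂ) (hP : P.PosSemidef)
    (hfull : IsUnit (Hhᴴ * Xi⁻¹ * Hh)) :
    (∀ V : Matrix (Fin M) (Fin N) ℂ, IsUnit (Vᴴ * Xi * V) →
      Real.logb 2
        ((1 + hP.sqrt * Hhᴴ * V * (Vᴴ * Xi * V)⁻¹ * Vᴴ * Hh * hP.sqrt).det.re) ≤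
      Real.logb 2
        ((1 + hP.sqrt * Hhᴴ * Xi⁻¹ * Hh * hP.sqrt).det.re)) ∧
    Real.logb 2
      ((1 + hP.sqrt * Hhᴴ * (Xi⁻¹ * Hh) *
          (((Xi⁻¹ * Hh)ᴴ * Xi * (Xi⁻¹ * Hh))⁻¹) * (Xi⁻¹ * Hh)ᴴ * Hh * hP.sqrt).det.re) =
    Real.logb 2 ((1 + hP.sqrt * Hhᴴ * Xi⁻¹ * Hh * hP.sqrt).det.re) := by
  set S := hP.sqrt
  have hS : Sᴴ = S := hP.posSemidef_sqrt.isHermitian.eq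
  have hconj : ∀ Q : Matrix (Fin M) (Fin M) ℂ,
      S * Hhᴴ * Q * Hh * S = (S * Hhᴴ) * Q * (S * Hhᴴ)ᴴ := fun Q => by
    simp [conjTranspose_mul, hS, Matrix.mul_assoc]
  constructor
  · intro V hV
    have hW : (Vᴴ * Xi * V).PosDef :=
      (hXi.posSemidef.conjTranspose_mul_mul_same V).posDef_iff_isUnit.mpr hV
    have hQ : (V * (Vᴴ * Xi * V)⁻¹ * Vᴴ).PosSemidef :=
      hW.inv.posSemidef.mul_mul_conjTranspose_same V
    rw [show S * Hhᴴ * V * (Vᴴ * Xi * V)⁻¹ * Vᴴ * Hh * S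
        = S * Hhᴴ * (V * (Vᴴ * Xi * V)⁻¹ * Vᴴ) * Hh * S by simp only [Matrix.mul_assoc],
      hconj, hconj]
    exact logb_re_det_one_add_le (hQ.mul_mul_conjTranspose_same _).nonneg
      (mul_mul_conjTranspose_mono _ (hXi.mul_inv_mul_conjTranspose_le_inv hV))
  · set G := Hhᴴ * Xi⁻¹ * Hh
    have hXiu : IsUnit Xi.det := (isUnit_iff_isUnit_det Xi).mp hXi.isUnit
    have hV₀ : (Xi⁻¹ * Hh)ᴴ = Hhᴴ * Xi⁻¹ := by
      rw [conjTranspose_mul, conjTranspose_nonsing_inv, hXi.isHermitian.eq]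
    have hW₀ : (Xi⁻¹ * Hh)ᴴ * Xi * (Xi⁻¹ * Hh) = G := by
      simp only [G, hV₀, Matrix.mul_assoc, mul_nonsing_inv_cancel_left _ _ hXiu]
    rw [hW₀, hV₀, show S * Hhᴴ * (Xi⁻¹ * Hh) * G⁻¹ * (Hhᴴ * Xi⁻¹) * Hh * S
        = S * (G * G⁻¹ * G) * S by simp only [G, Matrix.mul_assoc],
      mul_nonsing_inv _ ((isUnit_iff_isUnit_det G).mp hfull), Matrix.one_mul]
    simp only [G, Matrix.mul_assoc]
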